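/- arXiv:2604.21880 — 4 statements merged into one kernel-verified Lean document; each statement's English description precedes it below -/
import Mathlib

section
/- Fix an integer k ≥ 2 and x ∈ ℂ. Suppose α_1, ..., α_k are pairwise distinct nonzero complex numbers satisfying ∑_{ν≠μ} 1/(α_μ - α_ν) - x/α_μ = 0 for all μ = 1, ..., k. Then x = (k-1)/2, and there exist M ∈ ℂ* and a primitive k-th root of unity ζ such that, up to permutation, (α_1, ..., α_k) = (M, Mζ, Mζ², ..., Mζ^{k-1}). Conversely, for x = (k-1)/2 any such tuple is a solution. -/
open Finset

section Aux
open Polynomial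

lemma derivFinsetProd {ι : Type*} [DecidableEq ι] (s : Finset ι) (f : ι → ℂ[X]) :
    derivative (∏ i ∈ s, f i) = ∑ i ∈ s, (∏ j ∈ s.erase i, f j) * derivative (f i) := by
  classical
  induction s using Finset.induction_on with
  | empty => simp
  | @insert a s ha ih =>
    rw [Finset.prod_insert ha, derivative_mul, ih, Finset.sum_insert ha,
      Finset.erase_insert ha, Finset.mul_sum]
    congr 1
    · exact mul_comm _ _
    apply Finset.sum_congr rfl
    intro i hi
    rw [Finset.erase_insert_of_ne (by rintro rfl; exact ha hi),
      Finset.prod_insert (fun h => ha (Finset.mem_of_mem_erase h)), mul_assoc]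

lemma evalDeriv {k : ℕ} (β : Fin k → ℂ) (μ : Fin k) :
    eval (β μ) (derivative (∏ ν, (X - C (β ν)))) =
      ∏ ν ∈ univ.erase μ, (β μ - β ν) := by
  rw [derivFinsetProd]
  simp only [derivative_sub, derivative_X, derivative_C, sub_zero, mul_one, eval_finset_sum]
  rw [Finset.sum_eq_single μ]
  · simp [eval_prod]
  · intro τ _ hτ
    rw [eval_prod]
    refine Finset.prod_eq_zero (Finset.mem_erase.mpr ⟨Ne.symm hτ, Finset.mem_univ μ⟩) ?_
    simp
  · simp

lemma evalDeriv2 {k : ℕ} (β : Fin k → ℂ) (μ : Fin k) :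
    eval (β μ) (derivative (derivative (∏ ν, (X - C (β ν))))) =
      2 * ∑ τ ∈ univ.erase μ, ∏ ν ∈ (univ.erase μ).erase τ, (β μ - β ν) := by
  rw [derivFinsetProd]
  simp only [derivative_sub, derivative_X, derivative_C, sub_zero, mul_one, derivative_sum]
  have hterm : ∀ τ : Fin k, derivative (∏ ν ∈ univ.erase τ, (X - C (β ν))) =
      ∑ σ ∈ (univ.erase τ), ∏ ν ∈ (univ.erase τ).erase σ, (X - C (β ν)) := by
    intro τ
    rw [derivFinsetProd]
    simp
  simp only [hterm, eval_finset_sum, eval_prod, eval_sub, eval_X, eval_C]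
  rw [← Finset.sum_erase_add _ _ (Finset.mem_univ μ)]
  have h1 : ∀ τ ∈ univ.erase μ,
      (∑ σ ∈ univ.erase τ, ∏ ν ∈ (univ.erase τ).erase σ, (β μ - β ν)) =
        ∏ ν ∈ (univ.erase μ).erase τ, (β μ - β ν) := by
    intro τ hτ
    have hμτ : μ ≠ τ := fun h => (Finset.mem_erase.mp hτ).1 h.symm
    rw [Finset.sum_eq_single_of_mem μ (Finset.mem_erase.mpr ⟨hμτ, Finset.mem_univ μ⟩)]
    · have he : (univ.erase τ).erase μ = (univ.erase μ).erase τ := by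
        ext x; simp [and_comm]
      rw [he]
    · intro σ hσ hσμ
      refine Finset.prod_eq_zero (Finset.mem_erase.mpr ⟨Ne.symm hσμ,
        Finset.mem_erase.mpr ⟨hμτ, Finset.mem_univ μ⟩⟩) ?_
      simp
  rw [Finset.sum_congr rfl h1]
  ring

lemma sumMulDeriv {k : ℕ} (β : Fin k → ℂ) (hβ : Function.Injective β) (μ : Fin k) :
    (∑ ν ∈ univ.erase μ, 1 / (β μ - β ν)) *
        eval (β μ) (derivative (∏ ν, (X - C (β ν)))) =
      eval (β μ) (derivative (derivative (∏ ν, (X - C (β ν))))) / 2 := by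
  rw [evalDeriv, evalDeriv2, Finset.sum_mul]
  rw [mul_comm (2:ℂ), mul_div_assoc, div_self (two_ne_zero), mul_one]
  apply Finset.sum_congr rfl
  intro ν hν
  have hνμ : ν ≠ μ := (Finset.mem_erase.mp hν).1
  have hne : β μ - β ν ≠ 0 := sub_ne_zero.mpr fun h => hνμ (hβ h).symm
  rw [← Finset.mul_prod_erase _ _ hν, one_div, inv_mul_cancel_left₀ hne]

end Aux

open Polynomial in
/-- For `k ≥ 2`, pairwise distinct nonzero `α₁,…,α_k` satisfying
`∑_{ν≠μ} 1/(α_μ - α_ν) - x/α_μ = 0` for all `μ` force `x = (k-1)/2`, and the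
solution is, up to permutation, `(M, Mζ, …, Mζ^{k-1})` for some `M ≠ 0` and a
primitive `k`-th root of unity `ζ`.  Conversely, for `x = (k-1)/2` any such
tuple is a solution. -/
theorem stmt_3 (k : ℕ) (hk : 2 ≤ k) :
    (∀ (x : ℂ) (α : Fin k → ℂ), Function.Injective α → (∀ μ, α μ ≠ 0) →
      (∀ μ : Fin k,
        (∑ ν ∈ Finset.univ.erase μ, 1 / (α μ - α ν)) - x / α μ = 0) →
      x = ((k : ℂ) - 1) / 2 ∧
      ∃ M ζ : ℂ, M ≠ 0 ∧ IsPrimitiveRoot ζ k ∧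
        ∃ σ : Equiv.Perm (Fin k), ∀ μ : Fin k, α (σ μ) = M * ζ ^ (μ : ℕ)) ∧
    (∀ M ζ : ℂ, M ≠ 0 → IsPrimitiveRoot ζ k →
      ∀ μ : Fin k,
        (∑ ν ∈ Finset.univ.erase μ,
            1 / (M * ζ ^ (μ : ℕ) - M * ζ ^ (ν : ℕ)))
          - (((k : ℂ) - 1) / 2) / (M * ζ ^ (μ : ℕ)) = 0) := by
  have hk0 : k ≠ 0 := by omega
  have hkc : ((k:ℂ)) ≠ 0 := Nat.cast_ne_zero.mpr hk0
  constructor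
  · intro x α hinj hne0 heq
    set p : ℂ[X] := ∏ ν, (X - C (α ν)) with hp
    have hmonic : p.Monic := monic_prod_of_monic _ _ fun ν _ => monic_X_sub_C _
    have hdeg : p.natDegree = k := by
      rw [hp, natDegree_prod _ _ (fun ν _ => X_sub_C_ne_zero _)]
      simp [natDegree_X_sub_C]
    have hSμ : ∀ μ, (∑ ν ∈ univ.erase μ, 1 / (α μ - α ν)) = x / α μ :=
      fun μ => sub_eq_zero.mp (heq μ)
    have key : ∀ μ, eval (α μ)
        (X * derivative (derivative p) - C (2*x) * derivative p) = 0 := by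
      intro μ
      have h2 := sumMulDeriv α hinj μ
      rw [hSμ μ] at h2
      have hα := hne0 μ
      simp only [eval_sub, eval_mul, eval_X, eval_C, ← hp] at h2 ⊢
      field_simp at h2
      linear_combination -h2
    have hqdeg : (X * derivative (derivative p) - C (2*x) * derivative p).natDegree < k := by
      have h1 : (X * derivative (derivative p)).natDegree ≤ k - 1 := by
        refine le_trans natDegree_mul_le ?_
        have e1 := natDegree_derivative_le (derivative p)
        have e2 := natDegree_derivative_le p
        rw [natDegree_X]
        omega
      have h2 : (C (2*x) * derivative p).natDegree ≤ k - 1 := by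
        refine le_trans (natDegree_C_mul_le _ _) ?_
        have := natDegree_derivative_le p
        omega
      have := natDegree_sub_le (X * derivative (derivative p)) (C (2*x) * derivative p)
      omega
    have hq0 : X * derivative (derivative p) - C (2*x) * derivative p = 0 :=
      Polynomial.eq_zero_of_natDegree_lt_card_of_eval_eq_zero _ hinj key
        (by simpa using hqdeg)
    have hcoeff : ∀ m : ℕ, p.coeff (m+2) * (((m:ℂ)+2) * ((m:ℂ)+1))
        - 2*x*(p.coeff (m+2) * ((m:ℂ)+2)) = 0 := by
      intro m
      have h := congrArg (fun r => Polynomial.coeff r (m+1)) hq0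
      simp only [coeff_sub, coeff_X_mul, coeff_derivative, coeff_C_mul, coeff_zero] at h
      push_cast at h
      linear_combination h
    have hck : p.coeff k = 1 := by
      have := hmonic.coeff_natDegree
      rwa [hdeg] at this
    have hx : x = ((k:ℂ)-1)/2 := by
      have h := hcoeff (k-2)
      have hk2 : k - 2 + 2 = k := by omega
      rw [hk2, hck] at h
      have hcast : ((k-2:ℕ):ℂ) = (k:ℂ) - 2 := by
        push_cast [Nat.cast_sub (by omega : 2 ≤ k)]; ring
      rw [hcast] at h
      have h' : (k:ℂ) * (((k:ℂ) - 1) - 2*x) = 0 := by linear_combination h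
      rcases mul_eq_zero.mp h' with h'' | h''
      · exact absurd h'' hkc
      · linear_combination -h''/2
    have hcz : ∀ j, 1 ≤ j → j < k → p.coeff j = 0 := by
      intro j hj1 hjk
      rcases Nat.lt_or_ge j 2 with hj2 | hj2
      · have hj : j = 1 := by omega
        subst hj
        have h := congrArg (fun r => Polynomial.coeff r 0) hq0
        simp only [coeff_sub, coeff_C_mul, coeff_derivative, coeff_zero, mul_coeff_zero,
          coeff_X_zero, coeff_C_zero, zero_mul, zero_sub, neg_eq_zero] at h
        rw [hx] at h
        have hk1 : ((k:ℂ) - 1) ≠ 0 := by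
          intro hh
          have h1 : (k:ℂ) = 1 := by linear_combination hh
          have h2 : k = 1 := by exact_mod_cast h1
          omega
        have h' : ((k:ℂ)-1) * p.coeff 1 = 0 := by linear_combination h
        rcases mul_eq_zero.mp h' with h'' | h''
        · exact absurd h'' hk1
        · exact h''
      · have h := hcoeff (j-2)
        have hj22 : j - 2 + 2 = j := by omega
        rw [hj22] at h
        have hcast : ((j-2:ℕ):ℂ) = (j:ℂ) - 2 := by
          push_cast [Nat.cast_sub hj2]; ring
        rw [hcast, hx] at h
        have h' : p.coeff j * ((j:ℂ) * ((j:ℂ) - (k:ℂ))) = 0 := by linear_combination h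
        rcases mul_eq_zero.mp h' with h'' | h''
        · exact h''
        · rcases mul_eq_zero.mp h'' with h3 | h3
          · exact absurd h3 (Nat.cast_ne_zero.mpr (by omega))
          · exfalso
            apply sub_ne_zero.mpr _ h3
            exact_mod_cast Nat.ne_of_lt hjk
    have hps : p = X^k + C (p.coeff 0) := by
      ext n
      rcases lt_trichotomy n k with hn | hn | hn
      · rcases Nat.eq_zero_or_pos n with rfl | hn0
        · rw [coeff_add, coeff_X_pow, if_neg (by omega : ¬ (0:ℕ) = k), coeff_C_zero, zero_add]
        · rw [hcz n hn0 hn, coeff_add, coeff_X_pow, if_neg (by omega : ¬ n = k), coeff_C,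
            if_neg (by omega : ¬ n = 0), add_zero]
      · subst hn
        rw [hck, coeff_add, coeff_X_pow, if_pos rfl, coeff_C, if_neg (by omega : ¬ n = 0),
          add_zero]
      · rw [coeff_eq_zero_of_natDegree_lt (by rw [hdeg]; omega : p.natDegree < n), coeff_add,
          coeff_X_pow, if_neg (by omega : ¬ n = k), coeff_C, if_neg (by omega : ¬ n = 0),
          add_zero]
    have hroot : ∀ μ, α μ ^ k + p.coeff 0 = 0 := by
      intro μ
      have h0 : eval (α μ) p = 0 := by
        rw [hp, eval_prod]
        exact Finset.prod_eq_zero (Finset.mem_univ μ) (by simp)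
      rw [hps] at h0
      simpa using h0
    have ha0 : p.coeff 0 ≠ 0 := by
      intro h
      have h1 := hroot ⟨0, by omega⟩
      rw [h, add_zero, pow_eq_zero_iff hk0] at h1
      exact hne0 _ h1
    obtain ⟨M, hM⟩ := IsAlgClosed.exists_pow_nat_eq (-(p.coeff 0)) (by omega : 0 < k)
    have hM0 : M ≠ 0 := by
      intro h
      rw [h, zero_pow hk0] at hM
      exact ha0 (neg_eq_zero.mp hM.symm)
    have hζ : IsPrimitiveRoot (Complex.exp (2 * Real.pi * Complex.I / k)) k :=
      Complex.isPrimitiveRoot_exp k hk0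
    haveI : NeZero k := ⟨hk0⟩
    set ζ := Complex.exp (2 * Real.pi * Complex.I / k) with hζdef
    have hex : ∀ μ, ∃ i : Fin k, M * ζ ^ (i:ℕ) = α μ := by
      intro μ
      have hpow : (α μ / M)^k = 1 := by
        rw [div_pow, hM, div_eq_one_iff_eq (neg_ne_zero.mpr ha0)]
        linear_combination hroot μ
      obtain ⟨i, hik, hi⟩ := hζ.eq_pow_of_pow_eq_one hpow
      refine ⟨⟨i, hik⟩, ?_⟩
      rw [hi]
      field_simp
    choose g hg using hex
    have hginj : Function.Injective g := by
      intro a b hab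
      apply hinj
      rw [← hg a, ← hg b, hab]
    have hbij := Finite.injective_iff_bijective.mp hginj
    refine ⟨hx, M, ζ, hM0, hζ, (Equiv.ofBijective g hbij).symm, fun μ => ?_⟩
    rw [← hg ((Equiv.ofBijective g hbij).symm μ)]
    congr 2
    exact congrArg (Fin.val) ((Equiv.ofBijective g hbij).apply_symm_apply μ)
  · intro M ζ hM hζ μ
    set β : Fin k → ℂ := fun ν => M * ζ ^ (ν:ℕ) with hβdef
    have hrw : ∀ ν : Fin k, M * ζ ^ (ν:ℕ) = β ν := fun _ => rfl
    simp only [hrw]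
    have hζ0 : ζ ≠ 0 := hζ.ne_zero hk0
    have hβ0 : β μ ≠ 0 := mul_ne_zero hM (pow_ne_zero _ hζ0)
    have hβinj : Function.Injective β := by
      intro a b hab
      have hzz : ζ ^ (a:ℕ) = ζ ^ (b:ℕ) := by
        have := mul_left_cancel₀ hM hab
        exact this
      exact Fin.ext (hζ.pow_inj a.isLt b.isLt hzz)
    have hprod : (∏ ν, (X - C (β ν))) = X^k - C (M^k) := by
      rw [X_pow_sub_C_eq_prod hζ (by omega : 0 < k) (rfl : M^k = M^k),
        ← Fin.prod_univ_eq_prod_range (fun i => X - C (ζ^i * M)) k]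
      apply Finset.prod_congr rfl
      intro ν _
      rw [mul_comm]
    have h2 := sumMulDeriv β hβinj μ
    rw [hprod] at h2
    have hd1 : derivative (X^k - C (M^k) : ℂ[X]) = C ((k:ℕ):ℂ) * X^(k-1) := by
      rw [derivative_sub, derivative_C, derivative_X_pow, sub_zero]
    have hd2 : derivative (C ((k:ℕ):ℂ) * X^(k-1) : ℂ[X])
        = C ((k:ℕ):ℂ) * (C ((k-1:ℕ):ℂ) * X^(k-2)) := by
      simp [derivative_X_pow, Nat.sub_sub]
    rw [hd1, hd2] at h2
    simp only [eval_mul, eval_C, eval_pow, eval_X] at h2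
    have hcast : ((k-1:ℕ):ℂ) = (k:ℂ) - 1 := by
      push_cast [Nat.cast_sub (by omega : 1 ≤ k)]; ring
    rw [hcast] at h2
    have hpow : β μ ^ (k-1) = β μ ^ (k-2) * β μ := by
      rw [← pow_succ]
      congr 1
      omega
    rw [hpow] at h2
    have hp2 : β μ ^ (k-2) ≠ 0 := pow_ne_zero _ hβ0
    have e1 : (((k:ℂ)-1)/2)/(β μ) * (β μ) = ((k:ℂ)-1)/2 := div_mul_cancel₀ _ hβ0
    have hgoal : ((∑ ν ∈ univ.erase μ, 1 / (β μ - β ν)) - (((k:ℂ)-1)/2)/(β μ))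
        * ((k:ℂ) * β μ ^ (k-2) * β μ * 2) = 0 := by
      linear_combination 2*h2 - 2*(k:ℂ)* (β μ ^ (k-2)) * e1
    rcases mul_eq_zero.mp hgoal with hgood | hbad
    · exact hgood
    · exact absurd hbad
        (mul_ne_zero (mul_ne_zero (mul_ne_zero hkc hp2) hβ0) two_ne_zero)
end

section
/- Let x_1, ..., x_n be pairwise distinct complex numbers and v_1, ..., v_n ∈ ℂ. If ∑_{ν ≠ μ} (v_μ - v_ν)/(x_μ - x_ν) = 0 for every μ = 1, ..., n, then all v_μ are equal. Equivalently, the left kernel of the associated n×n matrix is spanned by the all-ones vector (1, ..., 1). -/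
open Finset Polynomial

/-- If `x₁,…,x_n` are pairwise distinct and
`∑_{ν≠μ} (v_μ - v_ν)/(x_μ - x_ν) = 0` for every `μ`, then all `v_μ` are equal. -/
theorem stmt_5 (n : ℕ) (hn : 1 ≤ n) (x v : Fin n → ℂ) (hx : Function.Injective x)
    (h : ∀ μ : Fin n,
      ∑ ν ∈ Finset.univ.erase μ, (v μ - v ν) / (x μ - x ν) = 0) :
    ∀ μ ν : Fin n, v μ = v ν := by
  classical
  have hxinj : Set.InjOn x (Finset.univ : Finset (Fin n)) := hx.injOn
  set f : ℂ[X] := Lagrange.interpolate Finset.univ x v with hf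
  have hfx : ∀ μ, f.eval (x μ) = v μ := fun μ =>
    Lagrange.eval_interpolate_at_node v hxinj (mem_univ μ)
  have hdegf : f.natDegree < n := by
    rcases eq_or_ne f 0 with h0 | h0
    · simp only [h0, Polynomial.natDegree_zero]; omega
    · rw [Polynomial.natDegree_lt_iff_degree_lt h0]
      simpa [hf] using Lagrange.degree_interpolate_lt v hxinj
  -- the quotient polynomials
  set q : Fin n → ℂ[X] := fun ν => (f - C (v ν)) /ₘ (X - C (x ν)) with hq
  have hqid : ∀ ν, (X - C (x ν)) * q ν = f - C (v ν) := by
    intro ν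
    apply Polynomial.mul_divByMonic_eq_iff_isRoot.mpr
    simp [Polynomial.IsRoot, hfx ν]
  have hqnd : ∀ ν, (q ν).natDegree = f.natDegree - 1 := by
    intro ν
    have := Polynomial.natDegree_divByMonic (f - C (v ν)) (monic_X_sub_C (x ν))
    rw [hq]
    simp only [this, Polynomial.natDegree_sub_C, Polynomial.natDegree_X_sub_C]
    simp [Polynomial.natDegree_X]
  have hqdeg : ∀ ν, (q ν).natDegree ≤ f.natDegree := fun ν => by rw [hqnd ν]; omega
  -- eval of q ν at x μ for μ ≠ ν
  have hqeval : ∀ μ ν : Fin n, μ ≠ ν → (q ν).eval (x μ) = (v μ - v ν) / (x μ - x ν) := by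
    intro μ ν hμν
    have hxne : x μ - x ν ≠ 0 := sub_ne_zero.mpr (fun hc => hμν (hx hc))
    have hh := congrArg (Polynomial.eval (x μ)) (hqid ν)
    simp only [Polynomial.eval_mul, Polynomial.eval_sub, Polynomial.eval_X,
      Polynomial.eval_C, hfx μ] at hh
    rw [eq_div_iff hxne, mul_comm]
    exact hh
  -- eval of q μ at x μ equals the derivative of f at x μ
  have hqself : ∀ μ, (q μ).eval (x μ) = f.derivative.eval (x μ) := by
    intro μ
    have hd := congrArg Polynomial.derivative (hqid μ)
    rw [Polynomial.derivative_mul, Polynomial.derivative_sub, Polynomial.derivative_C,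
      sub_zero] at hd
    have := congrArg (Polynomial.eval (x μ)) hd
    simpa using this
  -- the key polynomial Q
  set Q : ℂ[X] := (∑ ν, q ν) - f.derivative with hQ
  have hQeval : ∀ μ, Q.eval (x μ) = 0 := by
    intro μ
    rw [hQ]
    simp only [Polynomial.eval_sub, Polynomial.eval_finset_sum]
    rw [← Finset.add_sum_erase _ _ (mem_univ μ), hqself μ]
    have : ∑ ν ∈ Finset.univ.erase μ, (q ν).eval (x μ)
        = ∑ ν ∈ Finset.univ.erase μ, (v μ - v ν) / (x μ - x ν) := by
      refine Finset.sum_congr rfl fun ν hν => hqeval μ ν ?_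
      exact fun hc => (Finset.mem_erase.mp hν).1 hc.symm
    rw [this, h μ]
    ring
  have hQdeg : Q.natDegree < n := by
    have h1 : (∑ ν, q ν).natDegree ≤ f.natDegree :=
      Polynomial.natDegree_sum_le_of_forall_le _ q (fun ν _ => hqdeg ν)
    have h2 : f.derivative.natDegree ≤ f.natDegree :=
      le_trans (Polynomial.natDegree_derivative_le f) (Nat.sub_le _ _)
    calc Q.natDegree ≤ max (∑ ν, q ν).natDegree f.derivative.natDegree :=
          Polynomial.natDegree_sub_le _ _
      _ ≤ f.natDegree := max_le h1 h2
      _ < n := hdegf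
  have hQ0 : Q = 0 := by
    apply Polynomial.eq_zero_of_natDegree_lt_card_of_eval_eq_zero Q hx hQeval
    simpa using hQdeg
  -- now show f has degree 0
  have hd0 : f.natDegree = 0 := by
    by_contra hd
    set d := f.natDegree with hdd
    have hd1 : 1 ≤ d := Nat.one_le_iff_ne_zero.mpr hd
    have hf0 : f ≠ 0 := fun hc => hd (by simp [hdd, hc])
    set c := f.leadingCoeff with hc
    have hcne : c ≠ 0 := Polynomial.leadingCoeff_ne_zero.mpr hf0
    -- coefficient of q ν at d - 1 is c
    have hqc : ∀ ν, (q ν).coeff (d - 1) = c := by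
      intro ν
      have hcoef := congrArg (fun p => Polynomial.coeff p d) (hqid ν)
      have hqd : (q ν).coeff d = 0 := by
        apply Polynomial.coeff_eq_zero_of_natDegree_lt
        rw [hqnd ν]; omega
      rw [sub_mul, Polynomial.coeff_sub] at hcoef
      have hXq : (X * q ν).coeff d = (q ν).coeff (d - 1) := by
        have h' := Polynomial.coeff_X_mul (q ν) (d - 1)
        rwa [show d - 1 + 1 = d by omega] at h'
      rw [hXq, Polynomial.coeff_C_mul, hqd, mul_zero, sub_zero,
        Polynomial.coeff_sub, Polynomial.coeff_C] at hcoef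
      have hdne : d ≠ 0 := by omega
      simp only [hdne, if_neg, ite_false] at hcoef
      rw [hcoef, sub_zero, hc]
      rfl
    -- compare coefficients at d - 1 in Q = 0
    have hzero := congrArg (fun p => Polynomial.coeff p (d - 1)) hQ0
    simp only [hQ, Polynomial.coeff_sub, Polynomial.coeff_zero,
      Polynomial.finset_sum_coeff] at hzero
    rw [Finset.sum_congr rfl (fun ν _ => hqc ν), Finset.sum_const, Finset.card_univ,
      Fintype.card_fin, Polynomial.coeff_derivative] at hzero
    have hd1' : (d - 1 : ℕ) + 1 = d := by omega
    have hcast : ((d - 1 : ℕ) : ℂ) + 1 = (d : ℂ) := by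
      exact_mod_cast congrArg (fun k : ℕ => (k : ℂ)) hd1'
    rw [hd1', hcast, nsmul_eq_mul] at hzero
    have hfd : f.coeff d = c := rfl
    rw [hfd] at hzero
    have hkey : c * ((n : ℂ) - d) = 0 := by linear_combination hzero
    rcases mul_eq_zero.mp hkey with hc0 | hnd
    · exact hcne hc0
    · have hnd' : (n : ℂ) = d := sub_eq_zero.mp hnd
      have : n = d := by exact_mod_cast hnd'
      omega
  -- conclude
  obtain ⟨a, ha⟩ := Polynomial.natDegree_eq_zero.mp hd0
  intro μ ν
  rw [← hfx μ, ← hfx ν, ← ha]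
  simp
end

section
/- For every r ∈ ℕ, r ≥ 1, the sum over all set partitions P of {1, ..., r} of the product, over blocks B of P, of the double factorial (2|B| - 2)!! equals (2r - 1)!!: ∑_{P ⊢ [r]} ∏_{B ∈ P} (2|B| - 2)!! = (2r - 1)!!. -/
open Finset

namespace Stmt13Aux

local notation "df" => Nat.doubleFactorial

lemma q_succ (m : ℕ) : df (2 * (m + 1) - 1) = (2 * m + 1) * df (2 * m - 1) := by
  cases m with
  | zero => simp
  | succ m =>
    have h1 : 2 * (m + 1 + 1) - 1 = (2 * (m + 1) - 1) + 2 := by omega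
    rw [h1, Nat.doubleFactorial_add_two]
    congr 1

lemma p_succ (m : ℕ) : df (2 * (m + 1)) = (2 * m + 2) * df (2 * m) := by
  have h1 : 2 * (m + 1) = (2 * m) + 2 := by omega
  rw [h1, Nat.doubleFactorial_add_two]

/-- The key numerical identity. -/
lemma key (n : ℕ) :
    ∑ k ∈ range (n + 1), n.choose k * (df (2 * k) * df (2 * (n - k) - 1))
      = df (2 * n + 1) := by
  induction n with
  | zero => simp
  | succ n ih =>
    have hsplit :
        ∑ k ∈ range (n + 2), (n + 1).choose k * (df (2 * k) * df (2 * (n + 1 - k) - 1))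
          = ∑ i ∈ range (n + 1), n.choose i * (df (2 * (i + 1)) * df (2 * (n - i) - 1))
            + ∑ k ∈ range (n + 2), n.choose k * (df (2 * k) * df (2 * (n + 1 - k) - 1)) := by
      rw [Finset.sum_range_succ'
        (f := fun k => (n + 1).choose k * (df (2 * k) * df (2 * (n + 1 - k) - 1))) (n + 1)]
      rw [Finset.sum_range_succ'
        (f := fun k => n.choose k * (df (2 * k) * df (2 * (n + 1 - k) - 1))) (n + 1)]
      simp only [Nat.choose_succ_succ', Nat.succ_sub_succ, add_mul]
      rw [Finset.sum_add_distrib]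
      simp only [Nat.choose_zero_right]
      ring
    have hlast :
        ∑ k ∈ range (n + 2), n.choose k * (df (2 * k) * df (2 * (n + 1 - k) - 1))
          = ∑ k ∈ range (n + 1), n.choose k * (df (2 * k) * df (2 * (n + 1 - k) - 1)) := by
      rw [Finset.sum_range_succ, Nat.choose_succ_self]
      simp
    rw [hsplit, hlast, ← Finset.sum_add_distrib]
    have hterm : ∀ k ∈ range (n + 1),
        n.choose k * (df (2 * (k + 1)) * df (2 * (n - k) - 1))
          + n.choose k * (df (2 * k) * df (2 * (n + 1 - k) - 1))
        = (2 * n + 3) * (n.choose k * (df (2 * k) * df (2 * (n - k) - 1))) := by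
      intro k hk
      rw [Finset.mem_range] at hk
      have hk' : k ≤ n := by omega
      have h1 : n + 1 - k = (n - k) + 1 := by omega
      rw [h1, q_succ, p_succ]
      have h2 : 2 * (n - k) + 1 + (2 * k + 2) = 2 * n + 3 := by omega
      rw [← h2]
      ring
    rw [Finset.sum_congr rfl hterm, ← Finset.mul_sum, ih]
    have h3 : 2 * (n + 1) + 1 = (2 * n + 1) + 2 := by omega
    rw [h3, Nat.doubleFactorial_add_two]

variable {α : Type*} [DecidableEq α]

lemma avoid_parts_of_mem {s : Finset α} (P : Finpartition s) {B : Finset α}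
    (hB : B ∈ P.parts) : (P.avoid B).parts = P.parts.erase B := by
  ext C
  rw [Finpartition.mem_avoid, mem_erase]
  constructor
  · rintro ⟨d, hd, hdB, rfl⟩
    have hne : d ≠ B := fun h => hdB (h ▸ le_refl _)
    have hdisj : Disjoint B d := (P.disjoint hd hB hne).symm
    rw [_root_.sdiff_eq_self_iff_disjoint.2 hdisj]
    exact ⟨hne, hd⟩
  · rintro ⟨hne, hC⟩
    have hdisj : Disjoint B C := (P.disjoint hC hB hne).symm
    refine ⟨C, hC, ?_, _root_.sdiff_eq_self_iff_disjoint.2 hdisj⟩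
    intro hle
    exact P.bot_notMem (hdisj.symm.eq_bot_of_le hle ▸ hC)

/-- Decomposition of the sum over finpartitions of `s` according to the part containing `a`. -/
lemma sum_decomp (f : Finset α → ℕ) {s : Finset α} {a : α} (ha : a ∈ s) :
    ∑ P : Finpartition s, ∏ C ∈ P.parts, f C
      = ∑ B ∈ s.powerset.filter (fun B => a ∈ B),
          f B * ∑ Q : Finpartition (s \ B), ∏ C ∈ Q.parts, f C := by
  have hmaps : ∀ P ∈ (univ : Finset (Finpartition s)),
      P.part a ∈ s.powerset.filter (fun B => a ∈ B) := by
    intro P _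
    rw [mem_filter, mem_powerset]
    exact ⟨P.le (P.part_mem.2 ha), P.mem_part ha⟩
  rw [← Finset.sum_fiberwise_of_maps_to hmaps]
  refine Finset.sum_congr rfl fun B hB => ?_
  rw [mem_filter, mem_powerset] at hB
  obtain ⟨hBs, haB⟩ := hB
  have hb : B ≠ (⊥ : Finset α) := by
    rw [Finset.bot_eq_empty]
    exact (Finset.nonempty_iff_ne_empty.1 ⟨a, haB⟩)
  have hab : Disjoint (s \ B) B := Finset.sdiff_disjoint
  have hc : (s \ B) ⊔ B = s := by
    rw [Finset.sup_eq_union, Finset.sdiff_union_of_subset hBs]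
  rw [Finset.mul_sum]
  refine Finset.sum_nbij' (fun P => P.avoid B) (fun Q => Q.extend hb hab hc)
    (fun P _ => Finset.mem_univ _) ?_ ?_ ?_ ?_
  · intro Q _
    rw [Finset.mem_filter]
    refine ⟨Finset.mem_univ _, ?_⟩
    exact Finpartition.part_eq_of_mem _ (by simp [Finpartition.extend]) haB
  · intro P hP
    rw [Finset.mem_filter] at hP
    have hBP : B ∈ P.parts := hP.2 ▸ P.part_mem.2 ha
    ext1
    rw [Finpartition.extend_parts, avoid_parts_of_mem P hBP, Finset.insert_erase hBP]
  · intro Q _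
    have hBQ : B ∉ Q.parts := by
      intro hmem
      have := Q.le hmem haB
      rw [Finset.mem_sdiff] at this
      exact this.2 haB
    have hBmem : B ∈ (Q.extend hb hab hc).parts := by
      rw [Finpartition.extend_parts]; exact Finset.mem_insert_self _ _
    ext1
    rw [avoid_parts_of_mem _ hBmem, Finpartition.extend_parts, Finset.erase_insert hBQ]
  · intro P hP
    rw [Finset.mem_filter] at hP
    have hBP : B ∈ P.parts := hP.2 ▸ P.part_mem.2 ha
    rw [avoid_parts_of_mem P hBP, ← Finset.mul_prod_erase _ _ hBP]

/-- The main lemma: the sum over finpartitions of any finset `s`. -/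
lemma main (s : Finset α) :
    ∑ P : Finpartition s, ∏ C ∈ P.parts, df (2 * C.card - 2) = df (2 * s.card - 1) := by
  induction s using Finset.strongInduction with
  | _ s ih =>
    rcases s.eq_empty_or_nonempty with rfl | ⟨a, ha⟩
    · have h1 : ∀ P : Finpartition (∅ : Finset α), P.parts = ∅ := fun P =>
        Finpartition.parts_eq_empty_iff.2 Finset.bot_eq_empty.symm
      have huniq : ∀ P : Finpartition (∅ : Finset α), P = ⊥ := by
        intro P; ext1; rw [h1, h1]
      rw [Fintype.sum_eq_single (⊥ : Finpartition (∅ : Finset α)) (fun P hP => absurd (huniq P) hP)]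
      simp [h1]
    · rw [sum_decomp (fun C => df (2 * C.card - 2)) ha]
      have hstep : ∀ B ∈ s.powerset.filter (fun B => a ∈ B),
          df (2 * B.card - 2) * ∑ Q : Finpartition (s \ B), ∏ C ∈ Q.parts, df (2 * C.card - 2)
            = df (2 * B.card - 2) * df (2 * (s.card - B.card) - 1) := by
        intro B hB
        rw [mem_filter, mem_powerset] at hB
        obtain ⟨hBs, haB⟩ := hB
        rw [ih (s \ B) (Finset.sdiff_ssubset hBs ⟨a, haB⟩), Finset.card_sdiff_of_subset hBs]
      rw [Finset.sum_congr rfl hstep]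
      -- reindex by erasing a
      have hre : ∑ B ∈ s.powerset.filter (fun B => a ∈ B),
          df (2 * B.card - 2) * df (2 * (s.card - B.card) - 1)
        = ∑ C ∈ (s.erase a).powerset,
            df (2 * C.card) * df (2 * (s.card - 1 - C.card) - 1) := by
        refine Finset.sum_nbij' (fun B => B.erase a) (fun C => insert a C) ?_ ?_ ?_ ?_ ?_
        · intro B hB
          rw [mem_filter, mem_powerset] at hB
          rw [mem_powerset]
          exact Finset.erase_subset_erase _ hB.1
        · intro C hC
          rw [mem_powerset] at hC
          rw [mem_filter, mem_powerset]
          exact ⟨Finset.insert_subset ha (hC.trans (Finset.erase_subset _ _)),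
            Finset.mem_insert_self _ _⟩
        · intro B hB
          rw [mem_filter] at hB
          exact Finset.insert_erase hB.2
        · intro C hC
          rw [mem_powerset] at hC
          exact Finset.erase_insert (fun haC => (Finset.mem_erase.1 (hC haC)).1 rfl)
        · intro B hB
          rw [mem_filter, mem_powerset] at hB
          obtain ⟨hBs, haB⟩ := hB
          have hcard : (B.erase a).card = B.card - 1 := Finset.card_erase_of_mem haB
          have hB1 : 1 ≤ B.card := Finset.card_pos.2 ⟨a, haB⟩
          have hBle : B.card ≤ s.card := Finset.card_le_card hBs
          have e1 : 2 * B.card - 2 = 2 * (B.erase a).card := by rw [hcard]; omega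
          have e2 : s.card - B.card = s.card - 1 - (B.erase a).card := by rw [hcard]; omega
          rw [e1, e2]
      rw [hre, Finset.sum_powerset_apply_card
        (fun k => df (2 * k) * df (2 * (s.card - 1 - k) - 1))]
      have hcard : (s.erase a).card = s.card - 1 := Finset.card_erase_of_mem ha
      have hs1 : 1 ≤ s.card := Finset.card_pos.2 ⟨a, ha⟩
      rw [hcard]
      simp only [smul_eq_mul]
      have := key (s.card - 1)
      rw [this]
      congr 1
      omega

end Stmt13Aux

/-- Summing over all set partitions `P` of `{1,…,r}` the product
over blocks `B ∈ P` of `(2|B| - 2)!!` gives `(2r - 1)!!`. -/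
theorem stmt_13 (r : ℕ) (hr : 1 ≤ r) :
    ∑ P : Finpartition (Finset.univ : Finset (Fin r)),
        ∏ B ∈ P.parts, Nat.doubleFactorial (2 * B.card - 2)
      = Nat.doubleFactorial (2 * r - 1) := by
  have := Stmt13Aux.main (Finset.univ : Finset (Fin r))
  rwa [Finset.card_univ, Fintype.card_fin] at this
end

section
/- For every r ∈ ℕ: ∑_{(k_1,k_2,k_3,k_4) ∈ ℕ^4, k_1+k_2+k_3+k_4 = r} (r! / (k_1! k_2! k_3! k_4!)) · ∏_{i=1}^{4} 3^{k_i} (2k_i - 1)!! = 6^r (r + 1)!. -/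
open Finset


open Finset

namespace Stmt15Aux

/-- `d k = (2k-1)!!`. -/
def d (k : ℕ) : ℕ := Nat.doubleFactorial (2 * k - 1)

lemma d_zero : d 0 = 1 := rfl

lemma d_succ (k : ℕ) : d (k + 1) = (2 * k + 1) * d k := by
  cases k with
  | zero => rfl
  | succ m =>
    show Nat.doubleFactorial (2 * (m + 2) - 1)
        = (2 * (m + 1) + 1) * Nat.doubleFactorial (2 * (m + 1) - 1)
    have h1 : 2 * (m + 2) - 1 = (2 * m + 1) + 2 := by omega
    have h2 : 2 * (m + 1) - 1 = 2 * m + 1 := by omega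
    rw [h1, h2, Nat.doubleFactorial_add_two]
    ring_nf

/-- `U n = ∑_{i+j=n} C(n,i) (2i-1)!! (2j-1)!!`. -/
def U (n : ℕ) : ℕ := ∑ p ∈ Finset.HasAntidiagonal.antidiagonal n, n.choose p.1 * (d p.1 * d p.2)

lemma U_zero : U 0 = 1 := by simp [U, d_zero]

lemma U_succ (n : ℕ) : U (n + 1) = (2 * n + 2) * U n := by
  have hY : d (n + 1) + (∑ p ∈ Finset.HasAntidiagonal.antidiagonal n, n.choose (p.1 + 1) * (d (p.1 + 1) * d p.2))
      = ∑ p ∈ Finset.HasAntidiagonal.antidiagonal n, n.choose p.1 * (d p.1 * d (p.2 + 1)) := by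
    have h1 := Finset.Nat.sum_antidiagonal_succ
      (n := n) (f := fun p => n.choose p.1 * (d p.1 * d p.2))
    have h2 := Finset.Nat.sum_antidiagonal_succ'
      (n := n) (f := fun p => n.choose p.1 * (d p.1 * d p.2))
    simp only [Nat.choose_zero_right, d_zero, one_mul, Nat.choose_succ_self,
      zero_mul, zero_add] at h1 h2
    rw [← h1, h2]
  have h1 := Finset.Nat.sum_antidiagonal_succ
    (n := n) (f := fun p => (n + 1).choose p.1 * (d p.1 * d p.2))
  simp only [Nat.choose_zero_right, d_zero, one_mul] at h1
  calc U (n + 1)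
      = d (n + 1) + ∑ p ∈ Finset.HasAntidiagonal.antidiagonal n, (n + 1).choose (p.1 + 1) * (d (p.1 + 1) * d p.2) := h1
    _ = d (n + 1) + ∑ p ∈ Finset.HasAntidiagonal.antidiagonal n,
          (n.choose p.1 * (d (p.1 + 1) * d p.2) + n.choose (p.1 + 1) * (d (p.1 + 1) * d p.2)) := by
        simp only [Nat.choose_succ_succ', add_mul]
    _ = (∑ p ∈ Finset.HasAntidiagonal.antidiagonal n, n.choose p.1 * (d (p.1 + 1) * d p.2))
        + (d (n + 1) + ∑ p ∈ Finset.HasAntidiagonal.antidiagonal n, n.choose (p.1 + 1) * (d (p.1 + 1) * d p.2)) := by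
        rw [Finset.sum_add_distrib]; ring
    _ = ∑ p ∈ Finset.HasAntidiagonal.antidiagonal n,
          (n.choose p.1 * (d (p.1 + 1) * d p.2) + n.choose p.1 * (d p.1 * d (p.2 + 1))) := by
        rw [hY, Finset.sum_add_distrib]
    _ = ∑ p ∈ Finset.HasAntidiagonal.antidiagonal n, (2 * n + 2) * (n.choose p.1 * (d p.1 * d p.2)) := by
        refine Finset.sum_congr rfl fun p hp => ?_
        have hpm : p.1 + p.2 = n := Finset.HasAntidiagonal.mem_antidiagonal.mp hp
        rw [d_succ p.1, d_succ p.2]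
        have : 2 * n + 2 = (2 * p.1 + 1) + (2 * p.2 + 1) := by omega
        rw [this]; ring
    _ = (2 * n + 2) * U n := by rw [← Finset.mul_sum]; rfl

lemma U_eq (n : ℕ) : U n = 2 ^ n * n.factorial := by
  induction n with
  | zero => simp [U_zero]
  | succ m ih =>
    rw [U_succ, ih, Nat.factorial_succ, pow_succ]
    ring

/-- `F k = 3^k (2k-1)!!`. -/
def F (k : ℕ) : ℕ := 3 ^ k * d k

def T (a : ℕ) : ℕ := ∑ p ∈ Finset.HasAntidiagonal.antidiagonal a, a.choose p.1 * (F p.1 * F p.2)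

lemma T_eq (a : ℕ) : T a = 6 ^ a * a.factorial := by
  have : T a = 3 ^ a * U a := by
    rw [U, Finset.mul_sum]
    refine Finset.sum_congr rfl fun p hp => ?_
    have hpm : p.1 + p.2 = a := Finset.HasAntidiagonal.mem_antidiagonal.mp hp
    rw [F, F, ← hpm, pow_add]
    ring
  rw [this, U_eq, ← mul_assoc, ← mul_pow]; norm_num

lemma mult4 (i j l m : ℕ) :
    Nat.multinomial (Finset.univ : Finset (Fin 4)) ![i, j, l, m]
      = ((i + j) + (l + m)).choose (i + j) * ((i + j).choose i * (l + m).choose l) := by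
  have hP : 0 < i.factorial * j.factorial * l.factorial * m.factorial :=
    Nat.mul_pos (Nat.mul_pos (Nat.mul_pos i.factorial_pos j.factorial_pos) l.factorial_pos)
      m.factorial_pos
  refine Nat.eq_of_mul_eq_mul_left hP ?_
  have h1 : (i + j).choose i * (i.factorial * j.factorial) = (i + j).factorial := by
    have := Nat.choose_mul_factorial_mul_factorial (Nat.le_add_right i j)
    simpa [Nat.add_sub_cancel_left, mul_assoc] using this
  have h2 : (l + m).choose l * (l.factorial * m.factorial) = (l + m).factorial := by
    have := Nat.choose_mul_factorial_mul_factorial (Nat.le_add_right l m)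
    simpa [Nat.add_sub_cancel_left, mul_assoc] using this
  have h3 : ((i + j) + (l + m)).choose (i + j) * ((i + j).factorial * (l + m).factorial)
      = ((i + j) + (l + m)).factorial := by
    have := Nat.choose_mul_factorial_mul_factorial (Nat.le_add_right (i + j) (l + m))
    simpa [Nat.add_sub_cancel_left, mul_assoc] using this
  have hspec := Nat.multinomial_spec (Finset.univ : Finset (Fin 4)) ![i, j, l, m]
  rw [Fin.prod_univ_four, Fin.sum_univ_four] at hspec
  simp only [Matrix.cons_val_zero, Matrix.cons_val_one, Matrix.head_cons,
    Matrix.cons_val_two, Matrix.tail_cons, Matrix.cons_val_three] at hspec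
  calc i.factorial * j.factorial * l.factorial * m.factorial
        * Nat.multinomial (Finset.univ : Finset (Fin 4)) ![i, j, l, m]
      = (i + j + (l + m)).factorial := by
        have he : i + j + (l + m) = i + j + l + m := by omega
        rw [he]; exact hspec
    _ = ((i + j) + (l + m)).choose (i + j)
          * (((i + j).choose i * (i.factorial * j.factorial))
            * ((l + m).choose l * (l.factorial * m.factorial))) := by
        rw [h1, h2, h3]
    _ = _ := by ring

end Stmt15Aux

open Stmt15Aux in
/-- For every `r`,
`∑_{k₁+k₂+k₃+k₄ = r} (r!/(k₁!k₂!k₃!k₄!)) ∏ᵢ 3^{kᵢ} (2kᵢ-1)!! = 6^r (r+1)!`. -/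
theorem stmt_15 (r : ℕ) :
    ∑ k ∈ Finset.Nat.antidiagonalTuple 4 r,
        Nat.multinomial Finset.univ k *
          ∏ i : Fin 4, 3 ^ (k i) * Nat.doubleFactorial (2 * k i - 1)
      = 6 ^ r * (r + 1).factorial := by
  classical
  set G : (Fin 4 → ℕ) → ℕ := fun k =>
    Nat.multinomial Finset.univ k *
      ∏ i : Fin 4, 3 ^ (k i) * Nat.doubleFactorial (2 * k i - 1) with hG
  have heta : ∀ k : Fin 4 → ℕ, ![k 0, k 1, k 2, k 3] = k := by
    intro k; funext i; fin_cases i <;> rfl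
  have hGval : ∀ i j l m : ℕ, G ![i, j, l, m]
      = ((i + j) + (l + m)).choose (i + j) *
        ((i + j).choose i * (F i * F j) * ((l + m).choose l * (F l * F m))) := by
    intro i j l m
    rw [hG]
    simp only [mult4, Fin.prod_univ_four]
    simp only [Matrix.cons_val_zero, Matrix.cons_val_one, Matrix.head_cons,
      Matrix.cons_val_two, Matrix.tail_cons, Matrix.cons_val_three]
    show _ = _
    simp only [F, d]
    ring
  let D : Finset (Σ _p : ℕ × ℕ, (ℕ × ℕ) × (ℕ × ℕ)) :=
    (Finset.HasAntidiagonal.antidiagonal r).sigma fun p => Finset.HasAntidiagonal.antidiagonal p.1 ×ˢ Finset.HasAntidiagonal.antidiagonal p.2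
  have hbij : ∑ k ∈ Finset.Nat.antidiagonalTuple 4 r, G k
      = ∑ x ∈ D, G ![x.2.1.1, x.2.1.2, x.2.2.1, x.2.2.2] := by
    refine Finset.sum_nbij'
      (fun k => ⟨(k 0 + k 1, k 2 + k 3), ((k 0, k 1), (k 2, k 3))⟩)
      (fun x => ![x.2.1.1, x.2.1.2, x.2.2.1, x.2.2.2]) ?_ ?_ ?_ ?_ ?_
    · intro k hk
      have h := Finset.Nat.mem_antidiagonalTuple.mp hk
      rw [Fin.sum_univ_four] at h
      simp only [D, Finset.mem_sigma, Finset.mem_product, Finset.HasAntidiagonal.mem_antidiagonal]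
      refine ⟨by omega, trivial, trivial⟩
    · rintro ⟨⟨a, b⟩, ⟨i, j⟩, ⟨l, m⟩⟩ hx
      simp only [D, Finset.mem_sigma, Finset.mem_product, Finset.HasAntidiagonal.mem_antidiagonal] at hx
      rw [Finset.Nat.mem_antidiagonalTuple, Fin.sum_univ_four]
      simp only [Matrix.cons_val_zero, Matrix.cons_val_one, Matrix.head_cons,
        Matrix.cons_val_two, Matrix.tail_cons, Matrix.cons_val_three]
      omega
    · intro k _
      exact heta k
    · rintro ⟨⟨a, b⟩, ⟨i, j⟩, ⟨l, m⟩⟩ hx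
      simp only [D, Finset.mem_sigma, Finset.mem_product, Finset.HasAntidiagonal.mem_antidiagonal] at hx
      obtain ⟨-, h1, h2⟩ := hx
      simp only [Matrix.cons_val_zero, Matrix.cons_val_one, Matrix.head_cons,
        Matrix.cons_val_two, Matrix.tail_cons, Matrix.cons_val_three]
      rw [h1, h2]
    · intro k _
      rw [heta k]
  rw [hbij, Finset.sum_sigma]
  have hinner : ∀ p ∈ Finset.HasAntidiagonal.antidiagonal r,
      (∑ x ∈ Finset.HasAntidiagonal.antidiagonal p.1 ×ˢ Finset.HasAntidiagonal.antidiagonal p.2,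
        G ![x.1.1, x.1.2, x.2.1, x.2.2]) = 6 ^ r * r.factorial := by
    intro p hp
    have hpr : p.1 + p.2 = r := Finset.HasAntidiagonal.mem_antidiagonal.mp hp
    have step : (∑ x ∈ Finset.HasAntidiagonal.antidiagonal p.1 ×ˢ Finset.HasAntidiagonal.antidiagonal p.2,
        G ![x.1.1, x.1.2, x.2.1, x.2.2])
        = ∑ u ∈ Finset.HasAntidiagonal.antidiagonal p.1, ∑ v ∈ Finset.HasAntidiagonal.antidiagonal p.2,
            r.choose p.1 * ((p.1.choose u.1 * (F u.1 * F u.2)) * (p.2.choose v.1 * (F v.1 * F v.2))) := by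
      rw [Finset.sum_product]
      refine Finset.sum_congr rfl fun u hu => Finset.sum_congr rfl fun v hv => ?_
      have hu' : u.1 + u.2 = p.1 := Finset.HasAntidiagonal.mem_antidiagonal.mp hu
      have hv' : v.1 + v.2 = p.2 := Finset.HasAntidiagonal.mem_antidiagonal.mp hv
      rw [hGval u.1 u.2 v.1 v.2, hu', hv', hpr]
    rw [step]
    have : (∑ u ∈ Finset.HasAntidiagonal.antidiagonal p.1, ∑ v ∈ Finset.HasAntidiagonal.antidiagonal p.2,
        r.choose p.1 * ((p.1.choose u.1 * (F u.1 * F u.2)) * (p.2.choose v.1 * (F v.1 * F v.2))))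
        = r.choose p.1 * (T p.1 * T p.2) := by
      have expand : ∀ (c : ℕ) (s t : Finset (ℕ × ℕ)) (A B : ℕ × ℕ → ℕ),
          (∑ u ∈ s, ∑ v ∈ t, c * (A u * B v))
            = c * ((∑ u ∈ s, A u) * (∑ v ∈ t, B v)) := by
        intro c s t A B
        rw [Finset.sum_mul_sum, Finset.mul_sum]
        exact Finset.sum_congr rfl fun u _ => (Finset.mul_sum _ _ _).symm
      rw [T, T]
      exact expand _ _ _ _ _
    rw [this, T_eq, T_eq]
    have hch : r.choose p.1 * (p.1.factorial * p.2.factorial) = r.factorial := by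
      have := Nat.choose_mul_factorial_mul_factorial (n := r) (k := p.1) (by omega)
      have hs : r - p.1 = p.2 := by omega
      rw [hs, mul_assoc] at this
      exact this
    calc r.choose p.1 * (6 ^ p.1 * p.1.factorial * (6 ^ p.2 * p.2.factorial))
        = 6 ^ (p.1 + p.2) * (r.choose p.1 * (p.1.factorial * p.2.factorial)) := by
          rw [pow_add]; ring
      _ = 6 ^ r * r.factorial := by rw [hpr, hch]
  rw [Finset.sum_congr rfl hinner, Finset.sum_const, Finset.Nat.card_antidiagonal,
    smul_eq_mul, Nat.factorial_succ]
  ring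
end
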